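/- For an integer k ≥ 3, every non-complete k-chordal graph contains two non-adjacent k-simplicial vertices. -/

import Mathlib

open SimpleGraph

variable {V : Type*}

/-- Open neighbourhood of a set of vertices. -/
def setNbhd (G : SimpleGraph V) (A : Set V) : Set V :=
  {x | x ∉ A ∧ ∃ a ∈ A, G.Adj a x}

/-- Closed neighbourhood of a set of vertices. -/
def closedNbhd (G : SimpleGraph V) (A : Set V) : Set V :=
  A ∪ setNbhd G A

/-- `A` is a connected non-dominating set: `G[A]` is connected and `N[A] ⊊ V`. -/
def ConnNonDom (G : SimpleGraph V) (A : Set V) : Prop :=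
  (G.induce A).Connected ∧ closedNbhd G A ≠ Set.univ

/-- `A` is a maximal connected non-dominating set. -/
def MaxConnNonDom (G : SimpleGraph V) (A : Set V) : Prop :=
  ConnNonDom G A ∧ ∀ A' : Set V, A ⊆ A' → ConnNonDom G A' → A' = A

/-- `G` is not complete. -/
def NonComplete (G : SimpleGraph V) : Prop :=
  ∃ u v : V, u ≠ v ∧ ¬ G.Adj u v

/-- A chordless (induced) path. -/
def IsInducedPath (G : SimpleGraph V) {x y : V} (p : G.Walk x y) : Prop :=
  p.IsPath ∧ ∀ u w : V, u ∈ p.support → w ∈ p.support → G.Adj u w → s(u, w) ∈ p.edges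

/-- A chordless (induced) cycle. -/
def IsInducedCycle (G : SimpleGraph V) {v : V} (c : G.Walk v v) : Prop :=
  c.IsCycle ∧ ∀ u w : V, u ∈ c.support → w ∈ c.support → G.Adj u w → s(u, w) ∈ c.edges

/-- `G` is `k`-chordal: no induced cycle of length greater than `k`. -/
def KChordal (G : SimpleGraph V) (k : ℕ) : Prop :=
  ∀ ⦃v : V⦄ (c : G.Walk v v), IsInducedCycle G c → c.length ≤ k

/-- `u` is an internal vertex of the path `p`. -/
def InternalVert (G : SimpleGraph V) {x y : V} (p : G.Walk x y) (u : V) : Prop :=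
  u ∈ p.support ∧ u ≠ x ∧ u ≠ y

/-- Condition (C1): any two distinct neighbours of `v` are at distance at most `k-2`
in `G - v`. -/
def SimpC1 (G : SimpleGraph V) (k : ℕ) (v : V) : Prop :=
  ∀ x y : V, G.Adj v x → G.Adj v y → x ≠ y →
    ∃ (hx : x ≠ v) (hy : y ≠ v)
      (p : (G.induce {u : V | u ≠ v}).Walk ⟨x, hx⟩ ⟨y, hy⟩), p.length ≤ k - 2

/-- Condition (C2): every induced path between non-adjacent neighbours of `v` whose
internal vertices avoid `N[v]` has at most `k-2` edges. -/
def SimpC2 (G : SimpleGraph V) (k : ℕ) (v : V) : Prop :=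
  ∀ x y : V, G.Adj v x → G.Adj v y → ¬ G.Adj x y → x ≠ y →
    ∀ p : G.Walk x y, IsInducedPath G p →
      (∀ u : V, InternalVert G p u → u ≠ v ∧ ¬ G.Adj v u) →
      p.length ≤ k - 2

/-- `v` is `k`-simplicial in `G`. -/
def KSimplicial (G : SimpleGraph V) (k : ℕ) (v : V) : Prop :=
  SimpC1 G k v ∧ SimpC2 G k v

/-- Vertices at position `≥ i` in the ordering `σ`. -/
def laterSet {V : Type*} [Fintype V] (σ : Fin (Fintype.card V) ≃ V)
    (i : Fin (Fintype.card V)) : Set V := {w | i ≤ σ.symm w}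

/-- `σ` is a `k`-simplicial ordering of the vertices of `G`. -/
def KSimplicialOrdering {V : Type*} [Fintype V] (G : SimpleGraph V) (k : ℕ)
    (σ : Fin (Fintype.card V) ≃ V) : Prop :=
  ∀ i : Fin (Fintype.card V),
    KSimplicial (G.induce (laterSet σ i)) k ⟨σ i, by simp [laterSet]⟩

/-- `S` separates `a` from `b`. -/
def IsSeparator (G : SimpleGraph V) (a b : V) (S : Set V) : Prop :=
  a ∉ S ∧ b ∉ S ∧ ∀ p : G.Walk a b, ∃ s ∈ S, s ∈ p.support

/-- `S` is a minimal `(a,b)`-vertex separator. -/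
def IsMinSeparator (G : SimpleGraph V) (a b : V) (S : Set V) : Prop :=
  IsSeparator G a b S ∧ ∀ T : Set V, T ⊂ S → ¬ IsSeparator G a b T

/-- `S` is a minimal vertex separator of `G`. -/
def IsMinVertexSeparator (G : SimpleGraph V) (S : Set V) : Prop :=
  ∃ a b : V, a ≠ b ∧ ¬ G.Adj a b ∧ IsMinSeparator G a b S

/-- `u` lies in the connected component `c` of `G - S`. -/
def InComponent (G : SimpleGraph V) (S : Set V)
    (c : (G.induce Sᶜ).ConnectedComponent) (u : V) : Prop :=
  ∃ h : u ∈ Sᶜ, (G.induce Sᶜ).connectedComponentMk ⟨u, h⟩ = c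

/-- `v` is 3-simplicial: its neighbourhood is a clique. -/
def Simplicial3 (G : SimpleGraph V) (v : V) : Prop :=
  ∀ x y : V, G.Adj v x → G.Adj v y → x ≠ y → G.Adj x y


/-!
Every vertex of a `k`-chordal graph satisfies (C2): an induced path between two neighbours of
`v` whose interior avoids `N[v]` closes up through `v` to an induced cycle, of length at most `k`.

For (C1), let `A` be a maximal connected non-dominating set. Maximality makes every vertex of
`N(A)` adjacent to every vertex outside `N[A]`, and two vertices of `N(A)` are joined by an
induced path through `A` that avoids the neighbourhood of any vertex outside `N[A]`. Hence a
vertex satisfying (C1) in `G - N[A]`, which exists by induction on the number of vertices, also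
satisfies (C1) in `G`. Starting from a non-adjacent pair `a, b`, this gives `v ∉ N[A₁]` with
`a ∈ A₁`, and then `u ∉ N[A₂]` with `v ∈ A₂`; so `u` and `v` are distinct and non-adjacent.
-/

namespace SimpleGraph.Walk

variable {W : Type*} {G : SimpleGraph V} {G' : SimpleGraph W} {u v : V}

lemma isChordless_of_length_eq_dist :
    ∀ {u v : V} (p : G.Walk u v), p.length = G.dist u v → p.IsChordless
  | _, _, nil, _ => by
    rw [isChordless_iff_forall_mem_edges]
    intro a b ha hb hab
    simp only [support_nil, List.mem_singleton] at ha hb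
    subst ha hb
    exact (hab.ne rfl).elim
  | u, v, cons (v := w) h q, hp => by
    classical
    have hq : q.length = G.dist w v := length_eq_dist_of_subwalk hp (isSubwalk_cons q h)
    have hnbr : ∀ z ∈ q.support, G.Adj u z → z = w := by
      intro z hz hadj
      by_contra hne
      have hshort := dist_le ((q.dropUntil z hz).cons hadj)
      have hdrop := length_dropUntil_lt_length hz hne
      simp only [length_cons] at hp hshort
      omega
    rw [isChordless_iff_forall_mem_edges]
    intro a b ha hb hab
    simp only [support_cons, List.mem_cons] at ha hb
    rcases ha with rfl | ha <;> rcases hb with rfl | hb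
    · exact (hab.ne rfl).elim
    · obtain rfl := hnbr b hb hab
      simp
    · obtain rfl := hnbr a ha hab.symm
      simp
    · exact List.mem_cons_of_mem _ ((isChordless_of_length_eq_dist q hq).mem_edges ha hb hab)

lemma IsChordless.map (f : G ↪g G') {p : G.Walk u v} (hp : p.IsChordless) :
    (p.map f.toHom).IsChordless := by
  rw [isChordless_iff_forall_mem_edges]
  intro a b ha hb hab
  simp only [support_map, List.mem_map] at ha hb
  obtain ⟨a, ha, rfl⟩ := ha
  obtain ⟨b, hb, rfl⟩ := hb
  rw [edges_map]
  exact List.mem_map.mpr ⟨_, hp.mem_edges ha hb (f.map_adj_iff.mp hab), by simp⟩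

lemma exists_isPath_isChordless_of_connected_induce {s : Set V} (hs : (G.induce s).Connected)
    {x y : V} (hx : x ∈ s) (hy : y ∈ s) :
    ∃ p : G.Walk x y, p.IsPath ∧ p.IsChordless ∧ ∀ z ∈ p.support, z ∈ s := by
  obtain ⟨q, hq, hlen⟩ := hs.exists_path_of_dist ⟨x, hx⟩ ⟨y, hy⟩
  refine ⟨q.map (Embedding.induce s).toHom, hq.map Subtype.val_injective,
    (isChordless_of_length_eq_dist q hlen).map _, ?_⟩
  intro z hz
  erw [support_map, List.mem_map] at hz
  obtain ⟨z, -, rfl⟩ := hz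
  exact z.2

end SimpleGraph.Walk

section Chordal

variable {W : Type*} {G : SimpleGraph V} {k : ℕ}

lemma isInducedPath_iff {x y : V} {p : G.Walk x y} :
    IsInducedPath G p ↔ p.IsPath ∧ p.IsChordless := by
  rw [Walk.isChordless_iff_forall_mem_edges]
  rfl

lemma isInducedCycle_iff {v : V} {c : G.Walk v v} :
    IsInducedCycle G c ↔ c.IsCycle ∧ c.IsChordless := by
  rw [Walk.isChordless_iff_forall_mem_edges]
  rfl

lemma KChordal.comap {G' : SimpleGraph W} (f : G' ↪g G) (hch : KChordal G k) : KChordal G' k := by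
  intro v c hc
  rw [isInducedCycle_iff] at hc
  simpa using hch (c.map f.toHom)
    (isInducedCycle_iff.mpr ⟨hc.1.map f.injective, hc.2.map f⟩)

lemma KChordal.induce (hch : KChordal G k) (s : Set V) : KChordal (G.induce s) k :=
  hch.comap (Embedding.induce s)

lemma isInducedCycle_cons_concat {v x y : V} {p : G.Walk x y} (hp : p.IsPath)
    (hpc : p.IsChordless) (hvx : G.Adj v x) (hvy : G.Adj v y) (hxy : x ≠ y)
    (hv : v ∉ p.support) (hnbr : ∀ u ∈ p.support, G.Adj v u → u = x ∨ u = y) :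
    IsInducedCycle G (Walk.cons hvx (p.concat hvy.symm)) := by
  refine isInducedCycle_iff.mpr ⟨(Walk.cons_isCycle_iff _ hvx).mpr ⟨hp.concat hv _, ?_⟩, ?_⟩
  · rw [Walk.edges_concat, List.concat_eq_append, List.mem_append, List.mem_singleton]
    rintro (h | h)
    · exact hv (Walk.fst_mem_support_of_mem_edges p h)
    · rw [Sym2.eq_iff] at h
      rcases h with ⟨rfl, -⟩ | ⟨-, rfl⟩
      · exact hvy.ne rfl
      · exact hxy rfl
  · rw [Walk.isChordless_iff_forall_mem_edges]
    intro a b ha hb hab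
    have hmem : ∀ {z}, z ∈ (Walk.cons hvx (p.concat hvy.symm)).support → z = v ∨ z ∈ p.support := by
      simp only [Walk.support_cons, Walk.support_concat, List.mem_cons, List.mem_append]
      tauto
    have hspoke : ∀ {z}, z ∈ p.support → G.Adj v z →
        s(v, z) ∈ (Walk.cons hvx (p.concat hvy.symm)).edges := by
      intro z hz hvz
      rcases hnbr z hz hvz with rfl | rfl <;> simp [Sym2.eq_swap]
    rcases hmem ha with rfl | hap <;> rcases hmem hb with rfl | hbp
    · exact (hab.ne rfl).elim
    · exact hspoke hbp hab
    · exact Sym2.eq_swap ▸ hspoke hap hab.symm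
    · simp [hpc.mem_edges hap hbp hab]

lemma KChordal.length_le_sub_two (hch : KChordal G k) {v x y : V} {p : G.Walk x y}
    (hp : p.IsPath) (hpc : p.IsChordless) (hvx : G.Adj v x) (hvy : G.Adj v y) (hxy : x ≠ y)
    (hv : v ∉ p.support) (hnbr : ∀ u ∈ p.support, G.Adj v u → u = x ∨ u = y) :
    p.length ≤ k - 2 := by
  have := hch _ (isInducedCycle_cons_concat hp hpc hvx hvy hxy hv hnbr)
  simp only [Walk.length_cons, Walk.length_concat] at this
  omega

lemma KChordal.simpC2 (hch : KChordal G k) (v : V) : SimpC2 G k v := by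
  intro x y hvx hvy _ hxy p hp hint
  rw [isInducedPath_iff] at hp
  refine hch.length_le_sub_two hp.1 hp.2 hvx hvy hxy
    (fun hv => (hint v ⟨hv, hvx.ne, hvy.ne⟩).1 rfl) fun u hu hvu => ?_
  by_contra! h
  exact (hint u ⟨hu, h⟩).2 hvu

end Chordal

section NonDominating

variable {G : SimpleGraph V} {A : Set V}

lemma mem_closedNbhd_iff {v : V} : v ∈ closedNbhd G A ↔ v ∈ A ∨ ∃ a ∈ A, G.Adj a v := by
  simp only [closedNbhd, setNbhd, Set.mem_union, Set.mem_ofPred_eq]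
  tauto

lemma ne_and_not_adj_of_notMem_closedNbhd {v a : V} (hv : v ∉ closedNbhd G A) (ha : a ∈ A) :
    v ≠ a ∧ ¬G.Adj v a := by
  rw [mem_closedNbhd_iff] at hv
  push Not at hv
  exact ⟨fun h => hv.1 (h ▸ ha), fun h => hv.2 a ha h.symm⟩

lemma connected_induce_insert (hA : (G.induce A).Connected) {a s : V} (ha : a ∈ A)
    (has : G.Adj a s) : (G.induce (insert s A)).Connected := by
  rw [← Set.union_singleton]
  exact connected_induce_union hA.preconnected Preconnected.of_subsingleton ha rfl has

lemma connNonDom_singleton {a b : V} (hab : a ≠ b) (hnadj : ¬G.Adj a b) : ConnNonDom G {a} := by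
  refine ⟨{ preconnected := .of_subsingleton, nonempty := ⟨⟨a, rfl⟩⟩ }, fun h => ?_⟩
  have hb : b ∈ closedNbhd G {a} := h ▸ Set.mem_univ b
  simp [mem_closedNbhd_iff, hab.symm, hnadj] at hb

lemma exists_maxConnNonDom_of_not_adj [Finite V] {a b : V} (hab : a ≠ b) (hnadj : ¬G.Adj a b) :
    ∃ A : Set V, a ∈ A ∧ MaxConnNonDom G A := by
  obtain ⟨A, ⟨haA, hA⟩, hmax⟩ := Set.Finite.exists_maximalFor id {A | {a} ⊆ A ∧ ConnNonDom G A}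
    (Set.toFinite _) ⟨{a}, subset_rfl, connNonDom_singleton hab hnadj⟩
  exact ⟨A, haA rfl, hA, fun A' hAA' hA' => (hmax ⟨haA.trans hAA', hA'⟩ hAA').antisymm hAA'⟩

lemma MaxConnNonDom.adj_of_mem_setNbhd (hA : MaxConnNonDom G A) {s w : V}
    (hs : s ∈ setNbhd G A) (hw : w ∉ closedNbhd G A) : G.Adj s w := by
  obtain ⟨hsA, a, ha, has⟩ := hs
  by_contra hsw
  have hw' : w ∉ closedNbhd G (insert s A) := by
    simp only [mem_closedNbhd_iff, Set.mem_insert_iff, exists_eq_or_imp, not_or] at hw ⊢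
    exact ⟨⟨fun hws => hw.2 ⟨a, ha, hws ▸ has⟩, hw.1⟩, hsw, hw.2⟩
  have hins := hA.2 _ (Set.subset_insert s A)
    ⟨connected_induce_insert hA.1.1 ha has, fun h => hw' (h ▸ Set.mem_univ w)⟩
  exact hsA (hins ▸ Set.mem_insert s A)

end NonDominating

section Simplicial

variable {G : SimpleGraph V} {k : ℕ} {v : V}

lemma simpC1_iff_exists_walk : SimpC1 G k v ↔ ∀ x y, G.Adj v x → G.Adj v y → x ≠ y →
    ∃ p : G.Walk x y, v ∉ p.support ∧ p.length ≤ k - 2 := by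
  constructor
  · intro h x y hvx hvy hxy
    obtain ⟨_, _, p, hp⟩ := h x y hvx hvy hxy
    refine ⟨p.map (Embedding.induce _).toHom, fun hv => ?_, (p.length_map _).trans_le hp⟩
    erw [Walk.support_map, List.mem_map] at hv
    obtain ⟨z, -, hz⟩ := hv
    exact z.2 hz
  · intro h x y hvx hvy hxy
    obtain ⟨p, hv, hp⟩ := h x y hvx hvy hxy
    refine ⟨hvx.ne', hvy.ne', p.induce {u | u ≠ v} fun z hz hzv => hv (hzv ▸ hz), ?_⟩
    rwa [← Walk.length_map (Embedding.induce _).toHom, Walk.map_induce]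

lemma Simplicial3.simpC1 (hk : 3 ≤ k) (h : Simplicial3 G v) : SimpC1 G k v :=
  simpC1_iff_exists_walk.mpr fun x y hvx hvy hxy =>
    ⟨(h x y hvx hvy hxy).toWalk, by simp [hvx.ne, hvy.ne], by simp; omega⟩

lemma MaxConnNonDom.simpC1 (hk : 3 ≤ k) (hch : KChordal G k) {A : Set V}
    (hA : MaxConnNonDom G A) (hv : v ∉ closedNbhd G A)
    (hW : SimpC1 (G.induce (closedNbhd G A)ᶜ) k ⟨v, hv⟩) : SimpC1 G k v := by
  rw [simpC1_iff_exists_walk] at hW ⊢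
  intro x y hvx hvy hxy
  by_cases hadj : G.Adj x y
  · exact ⟨hadj.toWalk, by simp [hvx.ne, hvy.ne], by simp; omega⟩
  have hnA : ∀ {z}, G.Adj v z → z ∉ A := fun hvz hz =>
    (ne_and_not_adj_of_notMem_closedNbhd hv hz).2 hvz
  have hsetNbhd : ∀ {z}, G.Adj v z → z ∈ closedNbhd G A → z ∈ setNbhd G A := fun hvz hz =>
    ⟨hnA hvz, (mem_closedNbhd_iff.mp hz).resolve_left (hnA hvz)⟩
  by_cases hx : x ∈ closedNbhd G A <;> by_cases hy : y ∈ closedNbhd G A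
  · obtain ⟨-, a, ha, hax⟩ := hsetNbhd hvx hx
    obtain ⟨-, b, hb, hby⟩ := hsetNbhd hvy hy
    have hconn : (G.induce (insert x (insert y A))).Connected :=
      connected_induce_insert (connected_induce_insert hA.1.1 hb hby)
        (Set.mem_insert_of_mem _ ha) hax
    obtain ⟨p, hp, hpc, hps⟩ := Walk.exists_isPath_isChordless_of_connected_induce hconn
      (Set.mem_insert _ _) (Set.mem_insert_of_mem _ (Set.mem_insert _ _))
    have hvp : v ∉ p.support := fun h => by
      rcases hps v h with h | h | h
      exacts [hvx.ne h, hvy.ne h, hv (Or.inl h)]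
    have hnbr : ∀ u ∈ p.support, G.Adj v u → u = x ∨ u = y := fun u hu hvu => by
      rcases hps u hu with h | h | h
      exacts [Or.inl h, Or.inr h, absurd h (hnA hvu)]
    exact ⟨p, hvp, hch.length_le_sub_two hp hpc hvx hvy hxy hvp hnbr⟩
  · exact absurd (hA.adj_of_mem_setNbhd (hsetNbhd hvx hx) hy) hadj
  · exact absurd (hA.adj_of_mem_setNbhd (hsetNbhd hvy hy) hx).symm hadj
  · obtain ⟨q, hq, hlen⟩ := hW ⟨x, hx⟩ ⟨y, hy⟩ hvx hvy (Subtype.coe_ne_coe.mp hxy)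
    refine ⟨q.map (Embedding.induce _).toHom, fun hvq => hq ?_, (q.length_map _).trans_le hlen⟩
    erw [Walk.support_map, List.mem_map] at hvq
    obtain ⟨z, hz, hzv⟩ := hvq
    exact (Subtype.ext hzv : z = ⟨v, hv⟩) ▸ hz

lemma exists_simpC1_notMem_closedNbhd [Finite V] (hk : 3 ≤ k) (hch : KChordal G k)
    {A : Set V} (hA : MaxConnNonDom G A) : ∃ v ∉ closedNbhd G A, SimpC1 G k v := by
  induction hn : Nat.card V using Nat.strong_induction_on generalizing V with
  | _ n ih =>
  set W := (closedNbhd G A)ᶜ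
  suffices ∃ w : W, SimpC1 (G.induce W) k w by
    obtain ⟨w, hw⟩ := this
    exact ⟨w, w.2, hA.simpC1 hk hch w.2 hw⟩
  by_cases hclique : ∀ a b : W, a ≠ b → (G.induce W).Adj a b
  · obtain ⟨w, hw⟩ := Set.nonempty_compl.mpr hA.1.2
    exact ⟨⟨w, hw⟩, Simplicial3.simpC1 hk fun x y _ _ => hclique x y⟩
  push Not at hclique
  obtain ⟨a, b, hab, hnadj⟩ := hclique
  obtain ⟨A', -, hA'⟩ := exists_maxConnNonDom_of_not_adj hab hnadj
  obtain ⟨⟨a₀, ha₀⟩⟩ := hA.1.1.nonempty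
  have hcard : Nat.card W < n := hn ▸ Finite.card_subtype_lt (not_not.mpr (Or.inl ha₀))
  obtain ⟨w, -, hw⟩ := ih _ hcard (hch.induce W) hA' rfl
  exact ⟨w, hw⟩

end Simplicial

theorem stmt8 [Fintype V] (G : SimpleGraph V) (k : ℕ) (hk : 3 ≤ k)
    (hch : KChordal G k) (hnc : NonComplete G) :
    ∃ u v : V, u ≠ v ∧ ¬ G.Adj u v ∧ KSimplicial G k u ∧ KSimplicial G k v := by
  obtain ⟨a, b, hab, hnadj⟩ := hnc
  obtain ⟨A₁, haA₁, hA₁⟩ := exists_maxConnNonDom_of_not_adj hab hnadj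
  obtain ⟨v, hvA₁, hv⟩ := exists_simpC1_notMem_closedNbhd hk hch hA₁
  obtain ⟨hva, hvnadj⟩ := ne_and_not_adj_of_notMem_closedNbhd hvA₁ haA₁
  obtain ⟨A₂, hvA₂, hA₂⟩ := exists_maxConnNonDom_of_not_adj hva hvnadj
  obtain ⟨u, huA₂, hu⟩ := exists_simpC1_notMem_closedNbhd hk hch hA₂
  obtain ⟨huv, hunadj⟩ := ne_and_not_adj_of_notMem_closedNbhd huA₂ hvA₂
  exact ⟨u, v, huv, hunadj, ⟨hu, hch.simpC2 u⟩, ⟨hv, hch.simpC2 v⟩⟩
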